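/- Let Σ be a d × d real symmetric positive semidefinite matrix, let σ > 0, and let Δ ∈ ℝᵈ. Then det(σ²·I + Σ) > 0, and (1/2)·( trace(σ²·I + Σ)/σ² + ‖Δ‖²/σ² − d + log(det(σ²·I)) − log(det(σ²·I + Σ)) ) ≤ ‖Δ‖²/(2σ²) + ‖Σ‖_F²/(4σ⁴). (The left-hand side is the Kullback–Leibler divergence KL(N(m, σ²I + Σ) ‖ N(c, σ²I)) of two d-dimensional Gaussians with Δ = c − m, so this bounds the error of mode-substitution re-annealing under a local Gaussian conditional surrogate.) -/

import Mathlib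

/-!
Diagonalize `Σ` with eigenvalues `λᵢ ≥ 0` and put `uᵢ = λᵢ / σ²`. The `‖Δ‖²` terms agree on both
sides, and the rest of the divergence splits as `½ ∑ᵢ (uᵢ - log (1 + uᵢ))`, while
`‖Σ‖_F² / (4σ⁴) = ½ ∑ᵢ uᵢ² / 2`. So it suffices that `u - log (1 + u) ≤ u² / 2` for `u ≥ 0`,
which follows from the Padé bound `log (1 + u) ≥ 2u / (u + 2)`.
-/

open Matrix Unitary

theorem Real.sub_log_one_add_le_sq_div_two {u : ℝ} (hu : 0 ≤ u) :
    u - Real.log (1 + u) ≤ u ^ 2 / 2 := by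
  have hlog := Real.le_log_one_add_of_nonneg hu
  have hu2 : 0 < u + 2 := by linarith
  have hgap : u - 2 * u / (u + 2) = u ^ 2 / (u + 2) := by field_simp; ring
  have hden : u ^ 2 / (u + 2) ≤ u ^ 2 / 2 :=
    div_le_div_of_nonneg_left (sq_nonneg u) two_pos (by linarith)
  linarith

theorem Real.div_add_log_sub_log_add_le {s e : ℝ} (hs : 0 < s) (he : 0 ≤ e) :
    e / s + Real.log s - Real.log (s + e) ≤ e ^ 2 / (2 * s ^ 2) := by
  have hsplit : Real.log (s + e) = Real.log s + Real.log (1 + e / s) := by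
    rw [← Real.log_mul hs.ne' (by positivity), mul_add, mul_one, mul_div_cancel₀ _ hs.ne']
  have hu := Real.sub_log_one_add_le_sq_div_two (div_nonneg he hs.le)
  rw [div_pow, div_div, mul_comm] at hu
  linarith

namespace Matrix

variable {n R : Type*} [Fintype n] [DecidableEq n] [CommRing R] [StarRing R]

theorem det_conjStarAlgAut (u : unitary (Matrix n n R)) (X : Matrix n n R) :
    (conjStarAlgAut R _ u X).det = X.det := by
  rw [conjStarAlgAut_apply, det_mul, det_mul, mul_right_comm, ← det_mul,
    mul_star_self_of_mem u.2, det_one, one_mul]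

theorem trace_conjStarAlgAut (u : unitary (Matrix n n R)) (X : Matrix n n R) :
    (conjStarAlgAut R _ u X).trace = X.trace := by
  rw [conjStarAlgAut_apply, trace_mul_cycle, coe_star_mul_self, one_mul]

namespace IsHermitian

variable {A : Matrix n n ℝ} (hA : A.IsHermitian)
include hA

theorem eq_conjStarAlgAut_diagonal :
    A = conjStarAlgAut ℝ _ hA.eigenvectorUnitary (diagonal hA.eigenvalues) := by
  simpa using hA.spectral_theorem

theorem det_smul_one_add (c : ℝ) : (c • 1 + A).det = ∏ i, (c + hA.eigenvalues i) := by
  conv_lhs => rw [hA.eq_conjStarAlgAut_diagonal]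
  rw [← map_one (conjStarAlgAut ℝ _ hA.eigenvectorUnitary), ← map_smul, ← map_add,
    det_conjStarAlgAut, smul_one_eq_diagonal, diagonal_add, det_diagonal]

theorem trace_transpose_mul_self : (Aᵀ * A).trace = ∑ i, hA.eigenvalues i ^ 2 := by
  rw [← conjTranspose_eq_transpose_of_trivial, hA.eq]
  conv_lhs => rw [hA.eq_conjStarAlgAut_diagonal]
  rw [← map_mul, trace_conjStarAlgAut, diagonal_mul_diagonal, trace_diagonal]
  simp [sq]

end IsHermitian

end Matrix

/-- KL bound for mode-substitution re-annealing: the Kullback–Leibler divergence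
`KL(N(m, σ²I + Σ) ‖ N(c, σ²I))` (written out in closed form, with `Δ = c − m`) is at most
`‖Δ‖²/(2σ²) + ‖Σ‖_F²/(4σ⁴)`; moreover `det(σ²I + Σ) > 0`. -/
theorem stmt_14 {d : ℕ} (S : Matrix (Fin d) (Fin d) ℝ) (hS : S.PosSemidef)
    (σ : ℝ) (hσ : 0 < σ) (Δ : EuclideanSpace ℝ (Fin d)) :
    0 < (σ ^ 2 • (1 : Matrix (Fin d) (Fin d) ℝ) + S).det ∧
      (1 / 2) *
          ((σ ^ 2 • (1 : Matrix (Fin d) (Fin d) ℝ) + S).trace / σ ^ 2 +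
            ‖Δ‖ ^ 2 / σ ^ 2 - (d : ℝ) +
            Real.log ((σ ^ 2 • (1 : Matrix (Fin d) (Fin d) ℝ)).det) -
            Real.log ((σ ^ 2 • (1 : Matrix (Fin d) (Fin d) ℝ) + S).det)) ≤
        ‖Δ‖ ^ 2 / (2 * σ ^ 2) + (Sᵀ * S).trace / (4 * σ ^ 4) := by
  have hσ2 : 0 < σ ^ 2 := by positivity
  have hA := hS.isHermitian
  have hnonneg : ∀ i, 0 ≤ hA.eigenvalues i := hS.eigenvalues_nonneg
  have hpos : ∀ i, 0 < σ ^ 2 + hA.eigenvalues i := fun i => by linarith [hnonneg i]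
  have hdet := hA.det_smul_one_add (σ ^ 2)
  refine ⟨hdet ▸ Finset.prod_pos fun i _ => hpos i, ?_⟩
  have htrace : (σ ^ 2 • (1 : Matrix (Fin d) (Fin d) ℝ) + S).trace / σ ^ 2
      = d + (∑ i, hA.eigenvalues i) / σ ^ 2 := by
    rw [trace_add, trace_smul, trace_one, hA.trace_eq_sum_eigenvalues]
    field_simp
    simp
  have hsum := Finset.sum_le_sum fun i (_ : i ∈ Finset.univ) =>
    Real.div_add_log_sub_log_add_le hσ2 (hnonneg i)
  rw [Finset.sum_sub_distrib, Finset.sum_add_distrib, ← Finset.sum_div, ← Finset.sum_div,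
    Finset.sum_const, Finset.card_univ, Fintype.card_fin, nsmul_eq_mul] at hsum
  rw [htrace, det_smul, det_one, mul_one, Fintype.card_fin, Real.log_pow, hdet,
    Real.log_prod fun i _ => (hpos i).ne', hA.trace_transpose_mul_self]
  have hΔ : ‖Δ‖ ^ 2 / (2 * σ ^ 2) = ‖Δ‖ ^ 2 / σ ^ 2 / 2 := by ring
  have hF : (∑ i, hA.eigenvalues i ^ 2) / (4 * σ ^ 4)
      = (∑ i, hA.eigenvalues i ^ 2) / (2 * (σ ^ 2) ^ 2) / 2 := by ring
  linarith
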